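/- Assume Hypotheses 1, 2 and 3. Then there is at most one classical solution of the stationary master equation; moreover, any classical solution is a monotone map on O_d. -/

import Mathlib

open scoped RealInnerProductSpace
noncomputable section

/-- `ℝ^d` with the Euclidean inner product. -/
abbrev Euc (d : ℕ) := EuclideanSpace ℝ (Fin d)

/-- The positive orthant `O_d = (ℝ≥0)^d`. -/
def Od (d : ℕ) : Set (Euc d) := {x | ∀ i, 0 ≤ x i}

/-- `B_R = {x ∈ O_d : x_1 + ... + x_d ≤ R}`. -/
def Ball1 (d : ℕ) (R : ℝ) : Set (Euc d) := {x | x ∈ Od d ∧ ∑ i, x i ≤ R}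

/-- A C¹ map `U : O_d → ℝ^d` is a classical solution of the stationary master equation if
for every `x ∈ O_d` and `i`:
`r Uⁱ(x) + ⟨F(x,U(x)), ∇ₓ Uⁱ(x)⟩ + λ(Uⁱ(x) − (T* U(Tx))ⁱ) = Gⁱ(x,U(x))`. -/
def IsClassicalSolS (d : ℕ) (F G : Euc d → Euc d → Euc d) (r lam : ℝ)
    (T : Euc d →L[ℝ] Euc d) (U : Euc d → Euc d) : Prop :=
  ContDiff ℝ 1 U ∧
  ∀ x ∈ Od d, ∀ i,
    r * U x i + fderiv ℝ (fun z : Euc d => U z i) x (F x (U x))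
      + lam * (U x i - ContinuousLinearMap.adjoint T (U (T x)) i)
      = G x (U x) i

/-! For two solutions `U`, `V` consider `Φ (x, y) = ⟪U x - V y, x - y⟫` on `B_R × B_R`,
`R ≥ R₀`, which is compact and invariant under `T`. Let `Φ` attain its minimum `m` at
`(x̄, ȳ)`. Hypotheses 1 and 2 say that `-F` points into `B_R`, so the derivative of `Φ` at
`(x̄, ȳ)` in the direction `(-F (x̄, U x̄), -F (ȳ, V ȳ))` is nonnegative. Inserting the master
equation, Hypothesis 3 and `m ≤ Φ (T x̄, T ȳ) = ⟪T* U (T x̄) - T* V (T ȳ), x̄ - ȳ⟫` turns this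
into `0 ≤ r m`. So `Φ ≥ 0` on `O_d × O_d`: for `V = U` this is monotonicity, and letting
`y = x + t eᵢ` with `t → 0⁺`, for both orders of `U` and `V`, gives `U x = V x`. -/

open Filter Topology

lemma isCompact_ball1 (d : ℕ) (R : ℝ) : IsCompact (Ball1 d R) := by
  let S : Set (Fin d → ℝ) := {f | 0 ≤ f ∧ ∑ i, f i ≤ R}
  have hS : IsCompact S := by
    refine (isCompact_Icc (a := 0) (b := fun _ => R)).of_isClosed_subset ?_
      fun f hf => ⟨hf.1, fun i => ?_⟩
    · exact (isClosed_le continuous_const continuous_id).inter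
        (isClosed_le (continuous_finsetSum _ fun i _ => continuous_apply i) continuous_const)
    · exact (Finset.single_le_sum (fun j _ => hf.1 j) (Finset.mem_univ i)).trans hf.2
  exact (PiLp.homeomorph 2 fun _ : Fin d => ℝ).isCompact_preimage.mpr hS

lemma eventually_add_mul_le {a b c : ℝ} (hac : a ≤ c) (hb : a = c → b ≤ 0) :
    ∀ᶠ t in 𝓝[>] (0 : ℝ), a + t * b ≤ c := by
  rcases hac.eq_or_lt with rfl | hlt
  · filter_upwards [self_mem_nhdsWithin] with t ht
    nlinarith [hb rfl, show (0 : ℝ) < t from ht]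
  · have hcont : Tendsto (fun t : ℝ => a + t * b) (𝓝 0) (𝓝 a) :=
      (by fun_prop : Continuous fun t : ℝ => a + t * b).tendsto' 0 a (by simp)
    exact nhdsWithin_le_nhds (hcont.eventually (eventually_le_nhds hlt))

lemma eventually_add_smul_mem_ball1 {d : ℕ} {R : ℝ} {z v : Euc d} (hz : z ∈ Ball1 d R)
    (hface : ∀ i, z i = 0 → 0 ≤ v i) (hsum : ∑ i, z i = R → ∑ i, v i ≤ 0) :
    ∀ᶠ t in 𝓝[>] (0 : ℝ), z + t • v ∈ Ball1 d R := by
  have hcoord : ∀ i, ∀ᶠ t in 𝓝[>] (0 : ℝ), -z i + t * -v i ≤ 0 := fun i =>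
    eventually_add_mul_le (neg_nonpos.2 (hz.1 i)) fun h => neg_nonpos.2 (hface i (neg_eq_zero.1 h))
  filter_upwards [eventually_all.2 hcoord, eventually_add_mul_le hz.2 hsum] with t hpos htot
  refine ⟨fun i => ?_, ?_⟩
  · simp only [PiLp.add_apply, PiLp.smul_apply, smul_eq_mul]
    linarith [hpos i]
  · simpa [Finset.sum_add_distrib, Finset.mul_sum] using htot

section InnerProductSpace

variable {E : Type*} [NormedAddCommGroup E] [InnerProductSpace ℝ E]

lemma IsLocalMinOn.inner_sub_hasFDerivAt_nonneg {U V : E → E} {U' V' : E →L[ℝ] E}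
    {x y v w : E} {K : Set (E × E)}
    (hmin : IsLocalMinOn (fun z : E × E => ⟪U z.1 - V z.2, z.1 - z.2⟫) K (x, y))
    (hU : HasFDerivAt U U' x) (hV : HasFDerivAt V V' y)
    (hvw : (v, w) ∈ posTangentConeAt K (x, y)) :
    0 ≤ ⟪U x - V y, v - w⟫ + ⟪U' v - V' w, x - y⟫ := by
  have hΦ := ((hU.comp (x, y) hasFDerivAt_fst).sub (hV.comp (x, y) hasFDerivAt_snd)).inner ℝ
    (hasFDerivAt_fst.sub hasFDerivAt_snd)
  simpa using hmin.hasFDerivWithinAt_nonneg hΦ.hasFDerivWithinAt hvw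

end InnerProductSpace

section MasterEquation

variable {d : ℕ} {F G : Euc d → Euc d → Euc d} {r lam : ℝ} {T : Euc d →L[ℝ] Euc d}
  {U V : Euc d → Euc d}

lemma IsClassicalSolS.fderiv_apply_eq (hU : IsClassicalSolS d F G r lam T U) {x : Euc d}
    (hx : x ∈ Od d) :
    fderiv ℝ U x (F x (U x)) =
      G x (U x) - r • U x - lam • (U x - ContinuousLinearMap.adjoint T (U (T x))) := by
  ext i
  have hcoord : HasFDerivAt (fun z => U z i) (PiLp.proj 2 _ i ∘L fderiv ℝ U x) x :=
    (PiLp.hasFDerivAt_apply (𝕜 := ℝ) 2 (U x) i).comp x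
      (hU.1.differentiable one_ne_zero x).hasFDerivAt
  have hpde := hU.2 x hx i
  rw [hcoord.fderiv] at hpde
  simp only [ContinuousLinearMap.comp_apply, PiLp.proj_apply] at hpde
  simp only [PiLp.sub_apply, PiLp.smul_apply, smul_eq_mul]
  linarith

lemma eventually_add_smul_neg_mem_ball1 {R₀ R : ℝ}
    (hyp1F : ∀ x ∈ Od d, ∀ p : Euc d, ∀ i, x i = 0 → F x p i ≤ 0)
    (hyp2F : ∀ x ∈ Od d, ∀ p : Euc d, R₀ ≤ ∑ i, x i → 0 ≤ ∑ i, F x p i)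
    (hR : R₀ ≤ R) {x : Euc d} (hx : x ∈ Ball1 d R) (p : Euc d) :
    ∀ᶠ t in 𝓝[>] (0 : ℝ), x + t • -F x p ∈ Ball1 d R :=
  eventually_add_smul_mem_ball1 hx
    (fun i hi => by simpa using hyp1F x hx.1 p i hi)
    (fun hsum => by simpa using hyp2F x hx.1 p (hsum ▸ hR))

lemma IsClassicalSolS.inner_sub_nonneg (hr : 0 < r) (hlam : 0 ≤ lam) {R₀ : ℝ}
    (hyp1F : ∀ x ∈ Od d, ∀ p : Euc d, ∀ i, x i = 0 → F x p i ≤ 0)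
    (hyp2F : ∀ x ∈ Od d, ∀ p : Euc d, R₀ ≤ ∑ i, x i → 0 ≤ ∑ i, F x p i)
    (hyp2T : ∀ R ≥ R₀, ∀ x ∈ Ball1 d R, T x ∈ Ball1 d R)
    (hyp3 : ∀ x ∈ Od d, ∀ y ∈ Od d, ∀ p q : Euc d,
      0 ≤ ⟪G x p - G y q, x - y⟫ + ⟪F x p - F y q, p - q⟫)
    (hU : IsClassicalSolS d F G r lam T U) (hV : IsClassicalSolS d F G r lam T V)
    {x y : Euc d} (hx : x ∈ Od d) (hy : y ∈ Od d) :
    0 ≤ ⟪U x - V y, x - y⟫ := by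
  set R := max R₀ (max (∑ i, x i) (∑ i, y i))
  have hR : R₀ ≤ R := le_max_left _ _
  set K := Ball1 d R ×ˢ Ball1 d R
  set Φ : Euc d × Euc d → ℝ := fun z => ⟪U z.1 - V z.2, z.1 - z.2⟫
  have hxy : (x, y) ∈ K :=
    ⟨⟨hx, (le_max_left _ _).trans (le_max_right _ _)⟩,
      ⟨hy, (le_max_right _ _).trans (le_max_right _ _)⟩⟩
  have hΦ : Continuous Φ := by
    have := hU.1.continuous; have := hV.1.continuous; fun_prop
  obtain ⟨⟨x', y'⟩, ⟨hx', hy'⟩, hmin⟩ :=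
    ((isCompact_ball1 d R).prod (isCompact_ball1 d R)).exists_isMinOn ⟨_, hxy⟩ hΦ.continuousOn
  refine le_trans ?_ (hmin hxy)
  set p := U x'
  set q := V y'
  set a := ContinuousLinearMap.adjoint T (U (T x'))
  set b := ContinuousLinearMap.adjoint T (V (T y'))
  have hcone : (-F x' p, -F y' q) ∈ posTangentConeAt K (x', y') :=
    mem_posTangentConeAt_of_frequently_mem <|
      ((eventually_add_smul_neg_mem_ball1 hyp1F hyp2F hR hx' p).and
        (eventually_add_smul_neg_mem_ball1 hyp1F hyp2F hR hy' q)).frequently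
  have hfirst := hmin.localize.inner_sub_hasFDerivAt_nonneg
    (hU.1.differentiable one_ne_zero x').hasFDerivAt
    (hV.1.differentiable one_ne_zero y').hasFDerivAt hcone
  rw [map_neg, map_neg, hU.fderiv_apply_eq hx'.1, hV.fderiv_apply_eq hy'.1] at hfirst
  have hTmin : Φ (x', y') ≤ ⟪a - b, x' - y'⟫ := by
    rw [← map_sub, ContinuousLinearMap.adjoint_inner_left, map_sub]
    exact hmin (show (T x', T y') ∈ K from ⟨hyp2T R hR x' hx', hyp2T R hR y' hy'⟩)
  have hmono := hyp3 x' hx'.1 y' hy'.1 p q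
  have hrm : 0 ≤ r * Φ (x', y') := by
    simp only [Φ, inner_sub_left, inner_sub_right, inner_neg_left, inner_neg_right,
      real_inner_smul_left, real_inner_comm p, real_inner_comm q] at hfirst hTmin hmono ⊢
    linarith [mul_le_mul_of_nonneg_left hTmin hlam]
  exact nonneg_of_mul_nonneg_right (by linarith) hr

lemma le_of_inner_sub_nonneg (hV : Continuous V) {x : Euc d}
    (hx : x ∈ Od d) (h : ∀ y ∈ Od d, 0 ≤ ⟪U x - V y, x - y⟫) (i : Fin d) : U x i ≤ V x i := by
  set e : Euc d := EuclideanSpace.single i 1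
  have he : ∀ j, 0 ≤ e j := fun j => by
    by_cases hj : j = i <;> simp [e, hj]
  have hlim : Tendsto (fun t : ℝ => V (x + t • e) i) (𝓝[>] 0) (𝓝 (V x i)) :=
    ((by fun_prop : Continuous fun t : ℝ => V (x + t • e) i).tendsto' 0 _
      (by simp)).mono_left nhdsWithin_le_nhds
  refine ge_of_tendsto hlim ?_
  filter_upwards [self_mem_nhdsWithin] with t (ht : 0 < t)
  have hmem : x + t • e ∈ Od d := fun j => add_nonneg (hx j) (mul_nonneg ht.le (he j))
  have hcomp := h _ hmem
  rw [show x - (x + t • e) = -(t • e) by abel, inner_neg_right, real_inner_smul_right,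
    EuclideanSpace.inner_single_right] at hcomp
  simp only [PiLp.sub_apply, one_mul, conj_trivial] at hcomp
  nlinarith

end MasterEquation

theorem uniqueness_and_monotonicity_classical_stationary_general
    (d : ℕ)
    (F G : Euc d → Euc d → Euc d)
    (r lam : ℝ) (hr : 0 < r) (hlam : 0 ≤ lam) (T : Euc d →L[ℝ] Euc d)
    -- Hypothesis 1
    (hyp1F : ∀ x ∈ Od d, ∀ p : Euc d, ∀ i, x i = 0 → F x p i ≤ 0)
    -- Hypothesis 2
    (R₀ : ℝ)
    (hyp2F : ∀ x ∈ Od d, ∀ p : Euc d, R₀ ≤ ∑ i, x i → 0 ≤ ∑ i, F x p i)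
    (hyp2T : ∀ R ≥ R₀, ∀ x ∈ Ball1 d R, T x ∈ Ball1 d R)
    -- Hypothesis 3
    (hyp3 : ∀ x ∈ Od d, ∀ y ∈ Od d, ∀ p q : Euc d,
      0 ≤ ⟪G x p - G y q, x - y⟫ + ⟪F x p - F y q, p - q⟫) :
    (∀ U V : Euc d → Euc d, IsClassicalSolS d F G r lam T U →
        IsClassicalSolS d F G r lam T V → ∀ x ∈ Od d, U x = V x) ∧
    (∀ U : Euc d → Euc d, IsClassicalSolS d F G r lam T U →
        ∀ x ∈ Od d, ∀ y ∈ Od d, 0 ≤ ⟪U x - U y, x - y⟫) := by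
  have hcomp {U V : Euc d → Euc d} (hU : IsClassicalSolS d F G r lam T U)
      (hV : IsClassicalSolS d F G r lam T V) {x y : Euc d} (hx : x ∈ Od d) (hy : y ∈ Od d) :
      0 ≤ ⟪U x - V y, x - y⟫ :=
    hU.inner_sub_nonneg hr hlam hyp1F hyp2F hyp2T hyp3 hV hx hy
  refine ⟨fun U V hU hV x hx => ?_, fun U hU x hx y hy => hcomp hU hU hx hy⟩
  ext i
  exact le_antisymm
    (le_of_inner_sub_nonneg hV.1.continuous hx (fun y hy => hcomp hU hV hx hy) i)
    (le_of_inner_sub_nonneg hU.1.continuous hx (fun y hy => hcomp hV hU hx hy) i)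

/-- Under Hypotheses 1, 2, 3 there is at most one classical solution of the stationary master
equation, and any classical solution is a monotone map on `O_d`. -/
theorem uniqueness_and_monotonicity_classical_stationary
    (d : ℕ) (hd : 1 ≤ d)
    (F G : Euc d → Euc d → Euc d)
    (hFc : Continuous fun q : Euc d × Euc d => F q.1 q.2)
    (hGc : Continuous fun q : Euc d × Euc d => G q.1 q.2)
    (r lam : ℝ) (hr : 0 < r) (hlam : 0 ≤ lam) (T : Euc d →L[ℝ] Euc d)
    -- Hypothesis 1
    (hyp1F : ∀ x ∈ Od d, ∀ p : Euc d, ∀ i, x i = 0 → F x p i ≤ 0)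
    (hyp1T : ∀ x ∈ Od d, T x ∈ Od d)
    -- Hypothesis 2
    (R₀ : ℝ) (hR₀ : 0 < R₀)
    (hyp2F : ∀ x ∈ Od d, ∀ p : Euc d, R₀ ≤ ∑ i, x i → 0 ≤ ∑ i, F x p i)
    (hyp2T : ∀ R ≥ R₀, ∀ x ∈ Ball1 d R, T x ∈ Ball1 d R)
    -- Hypothesis 3
    (hyp3 : ∀ x ∈ Od d, ∀ y ∈ Od d, ∀ p q : Euc d,
      0 ≤ ⟪G x p - G y q, x - y⟫ + ⟪F x p - F y q, p - q⟫) :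
    (∀ U V : Euc d → Euc d, IsClassicalSolS d F G r lam T U →
        IsClassicalSolS d F G r lam T V → ∀ x ∈ Od d, U x = V x) ∧
    (∀ U : Euc d → Euc d, IsClassicalSolS d F G r lam T U →
        ∀ x ∈ Od d, ∀ y ∈ Od d, 0 ≤ ⟪U x - U y, x - y⟫) :=
  uniqueness_and_monotonicity_classical_stationary_general d F G r lam hr hlam T hyp1F R₀ hyp2F
    hyp2T hyp3
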